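/- arXiv:1703.05306 — 4 statements merged into one kernel-verified Lean document; each statement's English description precedes it below -/
import Mathlib

section
/- Define T : ℕ → ℕ → ℕ recursively by T(m,0) = 0, T(m,m) = 0, and T(m,r) ≤ T(m-1,r-1) + T(m-1,r) + 2^{m-1} for 0 < r < m. Then any function satisfying these relations obeys T(m,r) ≤ 2^m · min(r, m-r). -/
/-!
`B m r = 2^m · min(r, m - r)` is a supersolution of the recurrence: since the two minima at
level `m - 1` sum to at most `2 · min(r, m - r) - 1`, one gets
`B(m-1, r-1) + B(m-1, r) + 2^(m-1) ≤ B(m, r)`. A subsolution vanishing on the boundary lies below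
any supersolution, by induction on `m`.
-/

theorem le_of_sub_super_recurrence {T B : ℕ → ℕ → ℕ} (c : ℕ → ℕ)
    (h0 : ∀ m, T m 0 = 0) (hm : ∀ m, T m m = 0)
    (hT : ∀ m r, 0 < r → r < m → T m r ≤ T (m - 1) (r - 1) + T (m - 1) r + c m)
    (hB : ∀ m r, 0 < r → r < m → B (m - 1) (r - 1) + B (m - 1) r + c m ≤ B m r) :
    ∀ m r, r ≤ m → T m r ≤ B m r := by
  intro m
  induction m with
  | zero =>
    intro r hr
    rw [Nat.le_zero.mp hr, h0]
    exact Nat.zero_le _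
  | succ m ih =>
    intro r hr
    rcases Nat.eq_zero_or_pos r with rfl | hr0
    · rw [h0]; exact Nat.zero_le _
    rcases hr.eq_or_lt with rfl | hrm
    · rw [hm]; exact Nat.zero_le _
    calc T (m + 1) r ≤ T m (r - 1) + T m r + c (m + 1) := hT (m + 1) r hr0 hrm
      _ ≤ B m (r - 1) + B m r + c (m + 1) := by
          gcongr
          exacts [ih _ (by omega), ih _ (by omega)]
      _ ≤ B (m + 1) r := hB (m + 1) r hr0 hrm

theorem two_pow_mul_min_supersolution {m r : ℕ} (hr0 : 0 < r) (hrm : r < m) :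
    2 ^ (m - 1) * min (r - 1) (m - 1 - (r - 1)) + 2 ^ (m - 1) * min r (m - 1 - r) + 2 ^ (m - 1)
      ≤ 2 ^ m * min r (m - r) := by
  obtain ⟨k, rfl⟩ : ∃ k, m = k + 1 := ⟨m - 1, by omega⟩
  have hmin : min (r - 1) (k - (r - 1)) + min r (k - r) + 1 ≤ 2 * min r (k + 1 - r) := by omega
  calc 2 ^ (k + 1 - 1) * min (r - 1) (k + 1 - 1 - (r - 1)) + 2 ^ (k + 1 - 1) * min r (k + 1 - 1 - r)
        + 2 ^ (k + 1 - 1)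
      = 2 ^ k * (min (r - 1) (k - (r - 1)) + min r (k - r) + 1) := by
        simp only [Nat.add_sub_cancel]; ring
    _ ≤ 2 ^ k * (2 * min r (k + 1 - r)) := Nat.mul_le_mul_left _ hmin
    _ = 2 ^ (k + 1) * min r (k + 1 - r) := by ring

/-- Recursive-encoding complexity bound: any `T` with `T(m,0) = 0`, `T(m,m) = 0`
and `T(m,r) ≤ T(m-1,r-1) + T(m-1,r) + 2^(m-1)` for `0 < r < m` satisfies
`T(m,r) ≤ 2^m · min(r, m-r)`. -/
theorem encoding_complexity (T : ℕ → ℕ → ℕ)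
    (h0 : ∀ m, T m 0 = 0) (hm : ∀ m, T m m = 0)
    (hrec : ∀ m r, 0 < r → r < m →
      T m r ≤ T (m - 1) (r - 1) + T (m - 1) r + 2 ^ (m - 1)) :
    ∀ m r, r ≤ m → T m r ≤ 2 ^ m * min r (m - r) :=
  le_of_sub_super_recurrence (fun m => 2 ^ (m - 1)) h0 hm hrec
    fun _ _ hr0 hrm => two_pow_mul_min_supersolution hr0 hrm
end

section
/- Define D : ℕ → ℕ → ℕ with D(m,0) ≤ 2^m, D(m,m) ≤ 2^m, and D(m,r) ≤ D(m-1,r-1) + D(m-1,r) + 2·2^m for 0 < r < m. Then D(m,r) ≤ 4·2^m·min(r,m-r) + 2^m. -/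
/-!
The bound `B(m,r) = 4·2^m·min(r, m-r) + 2^m` is itself a supersolution of the recursion:
the two smaller minima add up to at most `2·min(r, m-r) - 1`, and the saved `4·2^(m-1) = 2·2^m`
pays exactly for the extra cost, while `B` dominates `2^m` on the boundary. A comparison
principle for Pascal-type recursions, proved by induction on `m`, then gives `D ≤ B`.
-/

section Comparison

variable {α : Type*} [AddCommMonoid α] [PartialOrder α] [IsOrderedAddMonoid α]

theorem le_of_pascal_supersolution (D B : ℕ → ℕ → α) (c : ℕ → α)
    (h0 : ∀ m, D m 0 ≤ B m 0) (hm : ∀ m, D m m ≤ B m m)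
    (hrec : ∀ m r, 0 < r → r < m → D m r ≤ D (m - 1) (r - 1) + D (m - 1) r + c m)
    (hB : ∀ m r, 0 < r → r < m → B (m - 1) (r - 1) + B (m - 1) r + c m ≤ B m r) :
    ∀ m r, r ≤ m → D m r ≤ B m r := by
  intro m
  induction m with
  | zero =>
    intro r hr
    obtain rfl := Nat.le_zero.mp hr
    exact h0 0
  | succ n ih =>
    intro r hr
    rcases Nat.eq_zero_or_pos r with rfl | hr0
    · exact h0 _
    rcases hr.eq_or_lt with rfl | hrlt
    · exact hm _
    calc D (n + 1) r ≤ D n (r - 1) + D n r + c (n + 1) := hrec _ _ hr0 hrlt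
      _ ≤ B n (r - 1) + B n r + c (n + 1) := by
        gcongr
        · exact ih _ (by omega)
        · exact ih _ (by omega)
      _ ≤ B (n + 1) r := hB _ _ hr0 hrlt

end Comparison

theorem min_pred_add_min_add_one_le (n r : ℕ) (hr0 : 0 < r) (hrn : r ≤ n) :
    min (r - 1) (n + 1 - r) + min r (n - r) + 1 ≤ 2 * min r (n + 1 - r) := by
  omega

def decodingBound (m r : ℕ) : ℕ := 4 * 2 ^ m * min r (m - r) + 2 ^ m

theorem decodingBound_rec (m r : ℕ) (hr0 : 0 < r) (hrm : r < m) :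
    decodingBound (m - 1) (r - 1) + decodingBound (m - 1) r + 2 * 2 ^ m ≤ decodingBound m r := by
  obtain ⟨n, rfl⟩ : ∃ n, m = n + 1 := ⟨m - 1, by omega⟩
  have hmin := min_pred_add_min_add_one_le n r hr0 (by omega)
  have hsub : n - (r - 1) = n + 1 - r := by omega
  simp only [decodingBound, Nat.add_sub_cancel, hsub, pow_succ]
  nlinarith [Nat.mul_le_mul_left (4 * 2 ^ n) hmin]

/-- Recursive-decoding complexity bound for algorithm `Ψ`: any `D` with
`D(m,0) ≤ 2^m`, `D(m,m) ≤ 2^m` and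
`D(m,r) ≤ D(m-1,r-1) + D(m-1,r) + 2·2^m` for `0 < r < m` satisfies
`D(m,r) ≤ 4·2^m·min(r, m-r) + 2^m`. -/
theorem decoding_complexity (D : ℕ → ℕ → ℕ)
    (h0 : ∀ m, D m 0 ≤ 2 ^ m) (hm : ∀ m, D m m ≤ 2 ^ m)
    (hrec : ∀ m r, 0 < r → r < m →
      D m r ≤ D (m - 1) (r - 1) + D (m - 1) r + 2 * 2 ^ m) :
    ∀ m r, r ≤ m → D m r ≤ 4 * 2 ^ m * min r (m - r) + 2 ^ m :=
  le_of_pascal_supersolution D decodingBound (fun m => 2 * 2 ^ m)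
    (fun m => (h0 m).trans (Nat.le_add_left _ _))
    (fun m => (hm m).trans (Nat.le_add_left _ _)) hrec decodingBound_rec
end

section
/- With the variance recursion μ(ξ·0) = (μ(ξ)+1)²−1, μ(ξ·1) = μ(ξ)/2 and initial value ε^{-2}−1, the path ξ*^g = (0^{r-1}, 1^{m-r-g}, 0, 1^g) yields μ(ξ*^g) = 2^{-g}·(((ε^{-2^r} − 1)·2^{r+g-m} + 1)² − 1). -/
/-- The variance propagated along a binary path `ξ` (read left to right)
starting from the initial variance `μ₀`: a `0`-step maps `μ ↦ (μ+1)² − 1`,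
a `1`-step maps `μ ↦ μ/2`. -/
noncomputable def pathVar (μ₀ : ℝ) (ξ : List Bool) : ℝ :=
  ξ.foldl (fun μ b => if b then μ / 2 else (μ + 1) ^ 2 - 1) μ₀

/-! In the shifted variable `μ + 1` a `0`-step is plain squaring, so the `r − 1` leading
squarings turn `ε⁻²` into `ε^{-2^r}`; the `m − r − g` halvings before the last squaring
contribute the factor `2^{r+g-m}`, and the final `g` halvings the factor `2^{-g}`. -/

section PathVar

variable (μ : ℝ) (l l₁ l₂ : List Bool)

theorem pathVar_cons_false : pathVar μ (false :: l) = pathVar ((μ + 1) ^ 2 - 1) l := rfl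

theorem pathVar_cons_true : pathVar μ (true :: l) = pathVar (μ / 2) l := rfl

theorem pathVar_singleton_false : pathVar μ [false] = (μ + 1) ^ 2 - 1 := rfl

theorem pathVar_append : pathVar μ (l₁ ++ l₂) = pathVar (pathVar μ l₁) l₂ :=
  List.foldl_append

theorem pathVar_replicate_false (k : ℕ) :
    pathVar μ (List.replicate k false) = (μ + 1) ^ 2 ^ k - 1 := by
  induction k generalizing μ with
  | zero => simp [pathVar]
  | succ k ih =>
    rw [List.replicate_succ, pathVar_cons_false, ih, sub_add_cancel, ← pow_mul, pow_succ']

theorem pathVar_replicate_true (k : ℕ) :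
    pathVar μ (List.replicate k true) = μ / 2 ^ k := by
  induction k generalizing μ with
  | zero => simp [pathVar]
  | succ k ih => rw [List.replicate_succ, pathVar_cons_true, ih, pow_succ', div_div]

end PathVar

theorem variance_weakest_path_g_general (ε : ℝ)
    (m r g : ℕ) (hr : 1 ≤ r) (hgm : g ≤ m - r) (hrm : r ≤ m) :
    pathVar ((ε ^ 2)⁻¹ - 1)
        (List.replicate (r - 1) false ++ List.replicate (m - r - g) true ++
          [false] ++ List.replicate g true) =
      (2 : ℝ) ^ (-(g : ℤ)) *
        ((((ε ^ 2 ^ r)⁻¹ - 1) * (2 : ℝ) ^ ((r : ℤ) + g - m) + 1) ^ 2 - 1) := by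
  have hsquarings : ((ε ^ 2)⁻¹ - 1 + 1) ^ 2 ^ (r - 1) = (ε ^ 2 ^ r)⁻¹ := by
    rw [sub_add_cancel, inv_pow, ← pow_mul, ← pow_succ', Nat.sub_add_cancel hr]
  have hhalvings : (2 : ℝ) ^ ((r : ℤ) + g - m) = ((2 : ℝ) ^ (m - r - g))⁻¹ := by
    rw [← zpow_natCast, ← zpow_neg]
    congr 1
    omega
  rw [pathVar_append, pathVar_append, pathVar_append, pathVar_replicate_false, hsquarings,
    pathVar_replicate_true, pathVar_singleton_false, pathVar_replicate_true, hhalvings,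
    zpow_neg, zpow_natCast]
  ring

/-- For the path `ξ*^g = (0^{r-1}, 1^{m-r-g}, 0, 1^g)` with `1 ≤ g ≤ m − r`,
`r ≥ 1`, and initial variance `ε⁻² − 1` (with `0 < ε ≤ 1`), the final variance
equals `2^{-g}·(((ε^{-2^r} − 1)·2^{r+g-m} + 1)² − 1)`. -/
theorem variance_weakest_path_g (ε : ℝ) (hε : 0 < ε) (hε1 : ε ≤ 1)
    (m r g : ℕ) (hr : 1 ≤ r) (hg : 1 ≤ g) (hgm : g ≤ m - r) (hrm : r ≤ m) :
    pathVar ((ε ^ 2)⁻¹ - 1)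
        (List.replicate (r - 1) false ++ List.replicate (m - r - g) true ++
          [false] ++ List.replicate g true) =
      (2 : ℝ) ^ (-(g : ℤ)) *
        ((((ε ^ 2 ^ r)⁻¹ - 1) * (2 : ℝ) ^ ((r : ℤ) + g - m) + 1) ^ 2 - 1) :=
  variance_weakest_path_g_general ε m r g hr hgm hrm
end

section
/- Let 1 ≤ g ≤ √m, r ≥ 2 fixed, and set ε̃_r = (c m 2^{r-m})^{1/2^r} with constant c > 0. Then the variance μ(ξ₁^g) = 2^{-g}(((ε̃_r^{-2^{r-1}} − 1)·2^{r+g-m} + 1)² − 1) satisfies μ(ξ₁^g)·2^{g+2} ≤ 2^{-(m-r)/2 + √m} for all sufficiently large m. -/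
/-!
Since `ε̃_r ^ 2^(r-1) = √(c m 2^(r-m))`, the quantity `x = (ε̃_r^{-2^{r-1}} - 1) 2^{r+g-m}` is at
least `-1` and at most `2^{g-(m-r)/2} / √(c m)`, which is at most a twelfth of
`R = 2^{-(m-r)/2+√m} ≤ 1` once `g ≤ √m` and `c m ≥ 144`. Then `μ(ξ₁^g) 2^{g+2} = 4 x (x + 2)`
is `≤ 0` if `x ≤ 0`, and at most `4 · (25/12) · R/12 < R` otherwise.
-/

open Real

lemma rpow_one_div_two_pow_pow_two_pow_pred {t : ℝ} (ht : 0 ≤ t) {r : ℕ} (hr : 1 ≤ r) :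
    (t ^ ((1 : ℝ) / 2 ^ r)) ^ 2 ^ (r - 1) = √t := by
  have hexp : (1 : ℝ) / 2 ^ r * ((2 ^ (r - 1) : ℕ) : ℝ) = 1 / 2 := by
    obtain ⟨n, rfl⟩ := Nat.exists_eq_add_of_le' hr
    push_cast
    rw [pow_succ]
    field_simp
  rw [← rpow_natCast, ← rpow_mul ht, hexp, sqrt_eq_rpow]

lemma inv_sqrt_mul_two_zpow_le {a : ℝ} (ha : 144 ≤ a) (k : ℤ) {y z : ℝ} (hyz : y ≤ z) :
    (√(a * 2 ^ k))⁻¹ * (2 : ℝ) ^ ((k : ℝ) + y) ≤ (2 : ℝ) ^ ((k : ℝ) / 2 + z) / 12 := by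
  have hsqrt_two_zpow : √((2 : ℝ) ^ k) = (2 : ℝ) ^ ((k : ℝ) / 2) := by
    rw [← rpow_intCast, sqrt_eq_rpow, ← rpow_mul zero_le_two]
    ring_nf
  have hsqrt_a : 12 ≤ √a := le_sqrt_of_sq_le (by linarith)
  calc (√(a * 2 ^ k))⁻¹ * (2 : ℝ) ^ ((k : ℝ) + y)
      = (2 : ℝ) ^ ((k : ℝ) / 2 + y) / √a := by
        rw [sqrt_mul (by linarith), hsqrt_two_zpow, show (k : ℝ) + y = k / 2 + (k / 2 + y) by ring,
          rpow_add zero_lt_two]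
        field_simp
    _ ≤ (2 : ℝ) ^ ((k : ℝ) / 2 + z) / 12 := by
        gcongr
        · norm_num

lemma four_mul_sq_add_one_sub_one_le {x R : ℝ} (hx : -2 ≤ x) (hxR : 12 * x ≤ R) (hR₀ : 0 ≤ R)
    (hR₁ : R ≤ 1) : 4 * ((x + 1) ^ 2 - 1) ≤ R := by
  rcases le_or_gt x 0 with hx₀ | hx₀
  · nlinarith
  · nlinarith

lemma two_mul_sqrt_add_le_self {m r : ℝ} (hm : 16 ≤ m) (hr : 2 * r ≤ m) : 2 * √m + r ≤ m := by
  have h4 : 4 ≤ √m := le_sqrt_of_sq_le (by linarith)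
  nlinarith [mul_self_sqrt (show 0 ≤ m by linarith)]

lemma four_mul_short_path_variance_le {a : ℝ} (ha : 144 ≤ a) (k : ℤ) {y z : ℝ} (hy : 0 ≤ y)
    (hyz : y ≤ z) (hkz : (k : ℝ) / 2 + z ≤ 0) :
    4 * ((((√(a * 2 ^ k))⁻¹ - 1) * (2 : ℝ) ^ ((k : ℝ) + y) + 1) ^ 2 - 1) ≤
      (2 : ℝ) ^ ((k : ℝ) / 2 + z) := by
  have hP₀ : 0 < (2 : ℝ) ^ ((k : ℝ) + y) := rpow_pos_of_pos two_pos _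
  have hP₁ : (2 : ℝ) ^ ((k : ℝ) + y) ≤ 1 :=
    rpow_le_one_of_one_le_of_nonpos one_le_two (by linarith)
  have hs₀ : 0 ≤ (√(a * 2 ^ k))⁻¹ := inv_nonneg.2 (sqrt_nonneg _)
  have hsP := inv_sqrt_mul_two_zpow_le ha k hyz
  apply four_mul_sq_add_one_sub_one_le
  · nlinarith
  · nlinarith
  · positivity
  · exact rpow_le_one_of_one_le_of_nonpos one_le_two hkz

/-- Chebyshev bound for the short left-end paths of algorithm `Φ`: for fixed
`r ≥ 2` and `c > 0`, with `ε̃_r = (c·m·2^{r-m})^{1/2^r}`, the variance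
`μ(ξ₁^g) = 2^{-g}·(((ε̃_r^{-2^{r-1}} − 1)·2^{r+g-m} + 1)² − 1)` satisfies
`μ(ξ₁^g)·2^{g+2} ≤ 2^{-(m-r)/2 + √m}` for all `1 ≤ g ≤ √m` and all
sufficiently large `m`. -/
theorem phi_short_path_bound (c : ℝ) (hc : 0 < c) (r : ℕ) (hr : 2 ≤ r) :
    ∃ M : ℕ, ∀ m : ℕ, M ≤ m → ∀ g : ℕ, 1 ≤ g → (g : ℝ) ≤ Real.sqrt m →
      let ε : ℝ := (c * m * (2 : ℝ) ^ ((r : ℤ) - m)) ^ ((1 : ℝ) / 2 ^ r)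
      let μ : ℝ := (2 : ℝ) ^ (-(g : ℤ)) *
        ((((ε ^ 2 ^ (r - 1))⁻¹ - 1) * (2 : ℝ) ^ ((r : ℤ) + g - m) + 1) ^ 2 - 1)
      μ * 2 ^ (g + 2) ≤ (2 : ℝ) ^ (-((m : ℝ) - r) / 2 + Real.sqrt m) := by
  obtain ⟨M₀, hM₀⟩ := exists_nat_ge (144 / c)
  refine ⟨max (max 16 (2 * r)) M₀, fun m hm g _ hgm => ?_⟩
  simp only [max_le_iff] at hm
  have hcm : 144 ≤ c * m := by
    rw [div_le_iff₀ hc] at hM₀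
    nlinarith [(Nat.cast_le (α := ℝ)).2 hm.2]
  have hmr : 2 * √m + r ≤ m :=
    two_mul_sqrt_add_le_self (by exact_mod_cast hm.1.1) (by exact_mod_cast hm.1.2)
  intro ε μ
  have hε : (ε ^ 2 ^ (r - 1))⁻¹ = (√(c * m * 2 ^ ((r : ℤ) - m)))⁻¹ := by
    rw [rpow_one_div_two_pow_pow_two_pow_pred (by positivity) (by omega)]
  have hP : (2 : ℝ) ^ ((r : ℤ) + g - m) = 2 ^ ((((r : ℤ) - m : ℤ) : ℝ) + g) := by
    rw [← rpow_intCast]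
    push_cast
    ring_nf
  have hR : -((m : ℝ) - r) / 2 = (((r : ℤ) - m : ℤ) : ℝ) / 2 := by
    push_cast
    ring
  have h4 : (2 : ℝ) ^ (-(g : ℤ)) * 2 ^ (g + 2) = 4 := by
    rw [← zpow_natCast, ← zpow_add₀ two_ne_zero]
    norm_num
  change (2 : ℝ) ^ (-(g : ℤ)) *
    ((((ε ^ 2 ^ (r - 1))⁻¹ - 1) * (2 : ℝ) ^ ((r : ℤ) + g - m) + 1) ^ 2 - 1) * 2 ^ (g + 2) ≤ _
  rw [mul_right_comm, h4, hε, hP, hR]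
  exact four_mul_short_path_variance_le hcm _ g.cast_nonneg hgm (by push_cast; linarith)
end
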